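/- Let N ≥ 14 be an even natural number and define stMAJ : (Fin N → Bool) → ℝ by stMAJ(x) = 1 if the Hamming weight |x| satisfies |x| > N/2, and stMAJ(x) = −1 otherwise. Let S be a finite set of points of the Boolean cube with |S| ≥ 2^N·(1 − 1/(2N²)), and let Q : (Fin N → Bool) → ℝ satisfy |Q(x)| ≤ 1 for every x and Q(x)·stMAJ(x) ≥ 1 − 1/N² for every x ∈ S. Then the Fourier degree of Q is at least N−1; that is, there exists a subset B of Fin N with |B| ≥ N−1 and Q̂(B) ≠ 0. -/

import Mathlib

open Finset

/-- Hamming weight of a point of the Boolean cube. -/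
def hw {N : ℕ} (x : Fin N → Bool) : ℕ :=
  (Finset.univ.filter fun i => x i = true).card

/-- Walsh character at index set `B`. -/
noncomputable def walsh {N : ℕ} (B : Finset (Fin N)) (x : Fin N → Bool) : ℝ :=
  (-1 : ℝ) ^ (B.filter fun i => x i = true).card

/-- Fourier–Walsh coefficient of `f` at `B`. -/
noncomputable def walshCoeff {N : ℕ} (f : (Fin N → Bool) → ℝ) (B : Finset (Fin N)) : ℝ :=
  ((2 : ℝ) ^ N)⁻¹ * ∑ x : Fin N → Bool, f x * walsh B x

open Classical in
/-- Fourier degree of `f`: the largest size of an index set with nonzero coefficient. -/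
noncomputable def walshDegree {N : ℕ} (f : (Fin N → Bool) → ℝ) : ℕ :=
  (Finset.univ.filter fun B : Finset (Fin N) => walshCoeff f B ≠ 0).sup Finset.card

/-- Strict majority on an even number of bits, with ±1 output. -/
noncomputable def stMAJ {N : ℕ} (x : Fin N → Bool) : ℝ :=
  if ((hw x : ℝ) > (N : ℝ) / 2) then 1 else -1

set_option maxHeartbeats 2000000

lemma alt_partial (n : ℕ) : ∀ m : ℕ,
    (∑ k ∈ range (m+1), (-1:ℝ)^k * (n+1).choose k) = (-1:ℝ)^m * n.choose m := by
  intro m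
  induction m with
  | zero => simp
  | succ m ih =>
    rw [Finset.sum_range_succ, ih, Nat.choose_succ_succ]
    push_cast
    ring

lemma cb_eq (j : ℕ) : Nat.centralBinom (j+1) = 2 * (2*j+1).choose (j+1) := by
  have h2 : (2*j+1).choose j = (2*j+1).choose (j+1) := by
    have := Nat.choose_symm (n := 2*j+1) (k := j+1) (by omega)
    have h3 : 2*j+1-(j+1) = j := by omega
    rw [h3] at this; exact this
  have h1 : 2*(j+1) = (2*j+1) + 1 := by ring
  rw [Nat.centralBinom, h1, Nat.choose_succ_succ', h2]
  ring

def cubeEquiv (N : ℕ) : Finset (Fin N) ≃ (Fin N → Bool) where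
  toFun s := fun i => decide (i ∈ s)
  invFun x := Finset.univ.filter fun i => x i = true
  left_inv s := by ext i; simp
  right_inv x := by funext i; simp

lemma hw_cubeEquiv {N : ℕ} (s : Finset (Fin N)) : hw (cubeEquiv N s) = s.card := by
  unfold hw cubeEquiv
  congr 1
  ext i; simp

lemma cube_sum (N : ℕ) (g : ℕ → ℝ) :
    ∑ x : Fin N → Bool, g (hw x) = ∑ k ∈ range (N+1), (N.choose k : ℝ) * g k := by
  rw [← Fintype.sum_equiv (cubeEquiv N) (fun s => g (s.card)) (fun x => g (hw x))
      (fun s => by rw [hw_cubeEquiv])]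
  rw [← Finset.powerset_univ, Finset.sum_powerset_apply_card]
  simp [Finset.card_univ, nsmul_eq_mul]

theorem stmt_11 {N : ℕ} (hN : 14 ≤ N) (heven : Even N)
    (S : Finset (Fin N → Bool))
    (hS : (S.card : ℝ) ≥ 2 ^ N * (1 - 1 / (2 * (N : ℝ) ^ 2)))
    (Q : (Fin N → Bool) → ℝ) (hQb : ∀ x, |Q x| ≤ 1)
    (hQM : ∀ x ∈ S, Q x * stMAJ x ≥ 1 - 1 / (N : ℝ) ^ 2) :
    ∃ B : Finset (Fin N), N - 1 ≤ B.card ∧ walshCoeff Q B ≠ 0 := by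
  classical
  obtain ⟨m, hm⟩ := heven
  have hmN : N = 2 * m := by omega
  have hm7 : 7 ≤ m := by omega
  -- the weight function
  set g : ℕ → ℝ := fun k => (if ((k:ℝ) > (N:ℝ)/2) then (1:ℝ) else -1) * (-1:ℝ)^k with hg
  have hwalsh : ∀ x : Fin N → Bool, walsh Finset.univ x = (-1:ℝ)^(hw x) := fun x => rfl
  have hstg : ∀ x : Fin N → Bool, stMAJ x * walsh Finset.univ x = g (hw x) := by
    intro x; rw [hwalsh, hg]; rfl
  -- T = sum of stMAJ * walsh
  set T : ℝ := ∑ x : Fin N → Bool, stMAJ x * walsh Finset.univ x with hT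
  have hTsum : T = ∑ k ∈ range (N+1), (N.choose k : ℝ) * g k := by
    rw [hT]
    rw [Finset.sum_congr rfl (fun x _ => hstg x)]
    exact cube_sum N g
  -- compute T
  set P : ℝ := (-1:ℝ)^m * ((2*m-1).choose m : ℝ) with hP
  have halt : ∀ j : ℕ, (∑ k ∈ range (j+1), (-1:ℝ)^k * (N.choose k : ℝ)) =
      (-1:ℝ)^j * ((2*m-1).choose j : ℝ) := by
    intro j
    have h1 : N = (2*m-1) + 1 := by omega
    rw [h1]
    exact alt_partial (2*m-1) j
  have hTval : T = -2 * P := by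
    rw [hTsum]
    have hsplit : range (N+1) = range (m+1) ∪ Finset.Ico (m+1) (N+1) := by
      rw [Finset.range_eq_Ico, Finset.range_eq_Ico]
      exact (Finset.Ico_union_Ico_eq_Ico (a := 0) (b := m+1) (c := N+1) (by omega) (by omega)).symm
    rw [hsplit, Finset.sum_union (by
      rw [Finset.range_eq_Ico]
      exact Finset.Ico_disjoint_Ico_consecutive 0 (m+1) (N+1))]
    have h1 : ∑ k ∈ range (m+1), (N.choose k : ℝ) * g k =
        - ∑ k ∈ range (m+1), (-1:ℝ)^k * (N.choose k : ℝ) := by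
      rw [← Finset.sum_neg_distrib]
      apply Finset.sum_congr rfl
      intro k hk
      have hk' : k ≤ m := by simpa [Nat.lt_succ_iff] using hk
      have hc : ¬ ((k:ℝ) > (N:ℝ)/2) := by
        push_neg
        rw [hmN]; push_cast
        rw [mul_comm, mul_div_assoc]
        norm_num
        exact_mod_cast hk'
      rw [hg]; simp only [if_neg hc]; ring
    have h2 : ∑ k ∈ Finset.Ico (m+1) (N+1), (N.choose k : ℝ) * g k =
        ∑ k ∈ Finset.Ico (m+1) (N+1), (-1:ℝ)^k * (N.choose k : ℝ) := by
      apply Finset.sum_congr rfl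
      intro k hk
      have hk' : m + 1 ≤ k := (Finset.mem_Ico.mp hk).1
      have hc : ((k:ℝ) > (N:ℝ)/2) := by
        rw [hmN]; push_cast
        rw [mul_comm, mul_div_assoc]
        norm_num
        exact_mod_cast hk'
      rw [hg]; simp only [if_pos hc]; ring
    have h3 : ∑ k ∈ Finset.Ico (m+1) (N+1), (-1:ℝ)^k * (N.choose k : ℝ) = - P := by
      have htot : ∑ k ∈ range (N+1), (-1:ℝ)^k * (N.choose k : ℝ) = 0 := by
        rw [halt N]
        rw [Nat.choose_eq_zero_of_lt (by omega)]
        simp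
      rw [hsplit, Finset.sum_union (by
        rw [Finset.range_eq_Ico]
        exact Finset.Ico_disjoint_Ico_consecutive 0 (m+1) (N+1))] at htot
      have := halt m
      rw [this] at htot
      rw [← hP] at htot
      linarith
    rw [h1, h2, h3, halt m, ← hP]
    ring
  have hTabs : |T| = (Nat.centralBinom m : ℝ) := by
    have hj : m = (m-1) + 1 := by omega
    have hcb : Nat.centralBinom m = 2 * (2*m-1).choose m := by
      rw [hj, cb_eq (m-1)]
      congr 2 <;> omega
    rw [hTval, hP, hcb]
    push_cast
    rw [abs_mul, abs_mul, abs_pow]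
    simp [abs_of_nonneg]
  -- lower bound on |T|
  have hcblb : (4:ℝ)^m < m * Nat.centralBinom m := by
    have := Nat.four_pow_lt_mul_centralBinom m (by omega)
    exact_mod_cast this
  -- error bound
  set A : ℝ := ∑ x : Fin N → Bool, Q x * walsh Finset.univ x with hA
  have hN0 : (0:ℝ) < (N:ℝ) := by positivity
  have herr : |A - T| ≤ 2 * 2^N / (N:ℝ)^2 := by
    rw [hA, hT, ← Finset.sum_sub_distrib]
    calc |∑ x : Fin N → Bool, (Q x * walsh Finset.univ x - stMAJ x * walsh Finset.univ x)|
        ≤ ∑ x : Fin N → Bool, |Q x - stMAJ x| := by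
          refine le_trans (Finset.abs_sum_le_sum_abs _ _) ?_
          apply Finset.sum_le_sum
          intro x _
          rw [← sub_mul, abs_mul, hwalsh, abs_pow, abs_neg, abs_one, one_pow, mul_one]
      _ ≤ 2 * 2^N / (N:ℝ)^2 := by
          have hstabs : ∀ x : Fin N → Bool, |stMAJ x| = 1 := by
            intro x; unfold stMAJ; split <;> norm_num
          have hSbound : ∀ x ∈ S, |Q x - stMAJ x| ≤ 1 / (N:ℝ)^2 := by
            intro x hx
            have h1 : |Q x - stMAJ x| = |Q x * stMAJ x - 1| := by
              have : Q x * stMAJ x - 1 = (Q x - stMAJ x) * stMAJ x := by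
                have hsq : stMAJ x * stMAJ x = 1 := by
                  unfold stMAJ; split <;> norm_num
                nlinarith [hsq]
              rw [this, abs_mul, hstabs x, mul_one]
            have h2 : Q x * stMAJ x ≤ 1 := by
              calc Q x * stMAJ x ≤ |Q x * stMAJ x| := le_abs_self _
                _ = |Q x| := by rw [abs_mul, hstabs x, mul_one]
                _ ≤ 1 := hQb x
            rw [h1, abs_of_nonpos (by linarith), neg_sub]
            have := hQM x hx
            linarith
          have hOut : ∀ x, |Q x - stMAJ x| ≤ 2 := by
            intro x
            calc |Q x - stMAJ x| ≤ |Q x| + |stMAJ x| := abs_sub _ _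
              _ ≤ 2 := by rw [hstabs x]; linarith [hQb x]
          rw [← Finset.sum_add_sum_compl S]
          have hc1 : ∑ x ∈ S, |Q x - stMAJ x| ≤ (S.card : ℝ) * (1/(N:ℝ)^2) := by
            calc ∑ x ∈ S, |Q x - stMAJ x| ≤ ∑ x ∈ S, 1/(N:ℝ)^2 :=
                  Finset.sum_le_sum hSbound
              _ = (S.card : ℝ) * (1/(N:ℝ)^2) := by rw [Finset.sum_const, nsmul_eq_mul]
          have hc2 : ∑ x ∈ Sᶜ, |Q x - stMAJ x| ≤ ((Sᶜ).card : ℝ) * 2 := by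
            calc ∑ x ∈ Sᶜ, |Q x - stMAJ x| ≤ ∑ x ∈ Sᶜ, (2:ℝ) :=
                  Finset.sum_le_sum (fun x _ => hOut x)
              _ = ((Sᶜ).card : ℝ) * 2 := by rw [Finset.sum_const, nsmul_eq_mul]
          have hcard : ((Sᶜ).card : ℝ) = 2^N - S.card := by
            rw [Finset.card_compl]
            have hle : S.card ≤ Fintype.card (Fin N → Bool) := Finset.card_le_univ S
            rw [Nat.cast_sub hle]
            congr 1
            rw [Fintype.card_fun]
            simp
          have hSle : (S.card : ℝ) ≤ 2^N := by
            have hle : S.card ≤ Fintype.card (Fin N → Bool) := Finset.card_le_univ S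
            calc (S.card : ℝ) ≤ (Fintype.card (Fin N → Bool) : ℝ) := by exact_mod_cast hle
              _ = 2^N := by rw [Fintype.card_fun]; push_cast; simp
          have hcompl : ((Sᶜ).card : ℝ) ≤ 2^N / (2*(N:ℝ)^2) := by
            rw [hcard]
            have h2 : (2:ℝ)^N * (1 - 1/(2*(N:ℝ)^2)) = 2^N - 2^N/(2*(N:ℝ)^2) := by
              field_simp
            rw [h2] at hS
            linarith
          have hNpos : (0:ℝ) < (N:ℝ)^2 := by positivity
          calc ∑ x ∈ S, |Q x - stMAJ x| + ∑ x ∈ Sᶜ, |Q x - stMAJ x|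
              ≤ (S.card : ℝ) * (1/(N:ℝ)^2) + ((Sᶜ).card : ℝ) * 2 := by linarith
            _ ≤ 2^N * (1/(N:ℝ)^2) + (2^N / (2*(N:ℝ)^2)) * 2 := by
                apply add_le_add
                · apply mul_le_mul_of_nonneg_right hSle (by positivity)
                · apply mul_le_mul_of_nonneg_right hcompl (by norm_num)
            _ = 2 * 2^N / (N:ℝ)^2 := by field_simp; ring
  -- conclude
  have hAne : A ≠ 0 := by
    have hTlb : (2:ℝ) * 2^N / (N:ℝ)^2 < |T| := by
      rw [hTabs, hmN]
      have hmpos : (0:ℝ) < (m:ℝ) := by positivity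
      have h4 : (4:ℝ)^m = 2^(2*m) := by rw [pow_mul]; norm_num
      rw [h4] at hcblb
      have : (2:ℝ) * 2^(2*m) / ((2*m:ℕ):ℝ)^2 < 2^(2*m)/(m:ℝ) := by
        push_cast
        rw [div_lt_div_iff₀ (by positivity) hmpos]
        have hp : (0:ℝ) < (2:ℝ)^(2*m) := by positivity
        have hm7' : (7:ℝ) ≤ (m:ℝ) := by exact_mod_cast hm7
        have h5 : 2*(m:ℝ) < (2*(m:ℝ))^2 := by nlinarith
        nlinarith [mul_lt_mul_of_pos_left h5 hp]
      calc (2:ℝ) * 2^(2*m) / ((2*m:ℕ):ℝ)^2 < 2^(2*m)/(m:ℝ) := this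
        _ < Nat.centralBinom m := by
            rw [div_lt_iff₀ hmpos]
            nlinarith
    have : |T| - |A - T| ≤ |A| := by
      have := abs_sub_abs_le_abs_sub T A
      rw [abs_sub_comm] at this
      linarith
    have hApos : 0 < |A| := by linarith
    exact abs_pos.mp hApos
  refine ⟨Finset.univ, ?_, ?_⟩
  · rw [Finset.card_univ, Fintype.card_fin]; omega
  · unfold walshCoeff
    rw [← hA]
    intro hcontra
    apply hAne
    have h2 : ((2:ℝ)^N)⁻¹ ≠ 0 := by positivity
    exact (mul_eq_zero.mp hcontra).resolve_left h2
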